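/- Let N ≥ 1, let v : ℝ^N → ℝ be bounded and lower semicontinuous, let r > 0, and let x₀ ∈ ℝ^N. Suppose (p, Y) ∈ J^{2,−} v_r(x₀), where v_r is the inf-convolution of v. Then, setting y₀ = x₀ − r² p, one has v_r(x₀) = v(y₀) + (r²/2)|p|² and (p, Y) ∈ J^{2,−} v(y₀). -/

import Mathlib

open scoped RealInnerProductSpace Topology
open Filter Asymptotics Metric MeasureTheory

noncomputable section

/-- Euclidean space ℝ^N. -/
abbrev E (N : ℕ) : Type := EuclideanSpace ℝ (Fin N)

/-- Inf-convolution `v_r(x) = inf_y (v(y) + |x-y|²/(2r²))`. -/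
def infConv {N : ℕ} (v : E N → ℝ) (r : ℝ) (x : E N) : ℝ :=
  ⨅ y : E N, (v y + ‖x - y‖ ^ 2 / (2 * r ^ 2))

/-- `(p, Y)` belongs to the second-order subjet `J^{2,-} w (x)`:
`Y` is symmetric and `w(x+h) ≥ w(x) + ⟨p,h⟩ + (1/2)⟨Yh,h⟩ + o(‖h‖²)` as `h → 0`. -/
def InSubjet {N : ℕ} (w : E N → ℝ) (x : E N) (p : E N) (Y : E N →ₗ[ℝ] E N) : Prop :=
  Y.IsSymmetric ∧ ∃ e : E N → ℝ, e =o[𝓝 (0 : E N)] (fun h => ‖h‖ ^ 2) ∧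
    ∀ᶠ h in 𝓝 (0 : E N), w (x + h) ≥ w x + ⟪p, h⟫ + (1 / 2) * ⟪Y h, h⟫ + e h

/-!
The infimum defining `v_r(x₀)` is attained at some `y₀`, because `v` is lower semicontinuous and
bounded below while the quadratic penalty is coercive. The paraboloid
`x ↦ v(y₀) + ‖x - y₀‖²/(2r²)` then touches `v_r` from above at `x₀`, so its slope
`(x₀ - y₀)/r²` must be the slope `p` of any subjet element of `v_r` at `x₀`, i.e. `y₀ = x₀ - r²p`.
Finally, testing the infimum at `x₀ + h` with the competitor `y₀ + h` gives
`v_r(x₀ + h) - v_r(x₀) ≤ v(y₀ + h) - v(y₀)`, which carries the subjet inequality from `v_r` at `x₀`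
over to `v` at `y₀`.
-/

theorem LowerSemicontinuous.exists_forall_le_of_isBounded {β : Type*} [PseudoMetricSpace β]
    [ProperSpace β] {f : β → ℝ} (hf : LowerSemicontinuous f) (x₀ : β)
    (h : Bornology.IsBounded {x : β | f x ≤ f x₀}) :
    ∃ x, ∀ y, f x ≤ f y := by
  have hK : IsCompact {x | f x ≤ f x₀} :=
    isCompact_of_isClosed_isBounded (hf.isClosed_preimage (f x₀)) h
  obtain ⟨a, ha, hmin⟩ := LowerSemicontinuousOn.exists_isMinOn ⟨x₀, le_refl (f x₀)⟩ hK
    (hf.lowerSemicontinuousOn _)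
  refine ⟨a, fun y => ?_⟩
  by_cases hy : f y ≤ f x₀
  · exact hmin hy
  · exact ha.trans (not_le.mp hy).le

theorem LowerSemicontinuous.exists_forall_le_add_norm_sq_div {F : Type*} [NormedAddCommGroup F]
    [ProperSpace F] {v : F → ℝ} (hv : LowerSemicontinuous v) (hbdd : BddBelow (Set.range v))
    {a : ℝ} (ha : 0 < a) (x : F) :
    ∃ y₀, ∀ y, v y₀ + ‖x - y₀‖ ^ 2 / a ≤ v y + ‖x - y‖ ^ 2 / a := by
  obtain ⟨m, hm⟩ := hbdd
  have hlsc : LowerSemicontinuous fun y => v y + ‖x - y‖ ^ 2 / a :=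
    hv.add (by fun_prop : Continuous fun y => ‖x - y‖ ^ 2 / a).lowerSemicontinuous
  refine hlsc.exists_forall_le_of_isBounded x ?_
  refine (isBounded_closedBall (x := x) (r := √(a * (v x - m)))).subset fun y hy => ?_
  have hvy : m ≤ v y := hm ⟨y, rfl⟩
  have hy : v y + ‖x - y‖ ^ 2 / a ≤ v x := by simpa using hy
  have hsq : ‖x - y‖ ^ 2 ≤ a * (v x - m) := by
    rw [← div_le_iff₀' ha]
    linarith
  rw [mem_closedBall', dist_eq_norm]
  simpa using Real.abs_le_sqrt hsq

section InnerProductSpace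

variable {F : Type*} [NormedAddCommGroup F] [InnerProductSpace ℝ F]

theorem eq_zero_of_isLittleO_norm_le_inner {g : F → ℝ} {q : F}
    (hg : g =o[𝓝 0] fun h => ‖h‖) (hle : ∀ᶠ h in 𝓝 0, g h ≤ ⟪q, h⟫) : q = 0 := by
  by_contra hq
  have hq' : 0 < ‖q‖ := norm_pos_iff.mpr hq
  have hdir : Tendsto (fun t : ℝ => -(t • q)) (𝓝[>] 0) (𝓝 0) :=
    tendsto_nhdsWithin_of_tendsto_nhds ((by fun_prop : Continuous fun t : ℝ => -(t • q)).tendsto'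
      0 0 (by simp))
  obtain ⟨t, ⟨hgt, hgle⟩, ht⟩ := ((hdir.eventually ((hg.def (half_pos hq')).and hle)).and
    self_mem_nhdsWithin).exists
  have ht : 0 < t := ht
  simp only [Real.norm_eq_abs, norm_neg, norm_smul, abs_mul, abs_norm, abs_of_pos ht,
    inner_neg_right, real_inner_smul_right, real_inner_self_eq_norm_sq] at hgt hgle
  nlinarith [abs_le.mp hgt, mul_pos ht (mul_pos hq' hq')]

theorem eq_of_eventually_inner_add_le_inner_add {a b : F} {g₁ g₂ : F → ℝ}
    (h₁ : g₁ =o[𝓝 0] fun h => ‖h‖) (h₂ : g₂ =o[𝓝 0] fun h => ‖h‖)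
    (hle : ∀ᶠ h in 𝓝 0, ⟪a, h⟫ + g₁ h ≤ ⟪b, h⟫ + g₂ h) : a = b := by
  refine (sub_eq_zero.mp (eq_zero_of_isLittleO_norm_le_inner (h₁.sub h₂) ?_)).symm
  filter_upwards [hle] with h hh
  rw [inner_sub_left]
  linarith

theorem LinearMap.isBigO_inner_apply_self [FiniteDimensional ℝ F] (Y : F →ₗ[ℝ] F) :
    (fun h => ⟪Y h, h⟫) =O[𝓝 0] fun h => ‖h‖ ^ 2 := by
  let Y' := LinearMap.toContinuousLinearMap Y
  refine IsBigO.of_bound ‖Y'‖ (Eventually.of_forall fun h => ?_)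
  calc ‖⟪Y h, h⟫‖ ≤ ‖Y h‖ * ‖h‖ := norm_inner_le_norm _ _
    _ ≤ ‖Y'‖ * ‖h‖ * ‖h‖ := by gcongr; exact Y'.le_opNorm h
    _ = ‖Y'‖ * ‖‖h‖ ^ 2‖ := by rw [norm_pow, norm_norm]; ring

end InnerProductSpace

section InfConv

variable {N : ℕ} {v : E N → ℝ} {r : ℝ} {x₀ y₀ : E N}

theorem infConv_le (hv : BddBelow (Set.range v)) (x y : E N) :
    infConv v r x ≤ v y + ‖x - y‖ ^ 2 / (2 * r ^ 2) := by
  obtain ⟨m, hm⟩ := hv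
  refine ciInf_le ⟨m, ?_⟩ y
  rintro _ ⟨z, rfl⟩
  have hvz : m ≤ v z := hm ⟨z, rfl⟩
  have hpen : 0 ≤ ‖x - z‖ ^ 2 / (2 * r ^ 2) := by positivity
  linarith

theorem infConv_eq_of_forall_le
    (hy₀ : ∀ y, v y₀ + ‖x₀ - y₀‖ ^ 2 / (2 * r ^ 2) ≤ v y + ‖x₀ - y‖ ^ 2 / (2 * r ^ 2)) :
    infConv v r x₀ = v y₀ + ‖x₀ - y₀‖ ^ 2 / (2 * r ^ 2) :=
  le_antisymm (ciInf_le ⟨_, Set.forall_mem_range.mpr hy₀⟩ y₀) (le_ciInf hy₀)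

theorem infConv_add_le (hv : BddBelow (Set.range v))
    (hy₀ : ∀ y, v y₀ + ‖x₀ - y₀‖ ^ 2 / (2 * r ^ 2) ≤ v y + ‖x₀ - y‖ ^ 2 / (2 * r ^ 2))
    (h : E N) :
    infConv v r (x₀ + h) ≤ infConv v r x₀ + ⟪(r ^ 2)⁻¹ • (x₀ - y₀), h⟫ + ‖h‖ ^ 2 / (2 * r ^ 2) := by
  have hle := infConv_le (r := r) hv (x₀ + h) y₀
  rw [show x₀ + h - y₀ = (x₀ - y₀) + h by abel, norm_add_sq_real] at hle
  rw [infConv_eq_of_forall_le hy₀, real_inner_smul_left]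
  convert hle using 1
  ring

theorem infConv_add_sub_le (hv : BddBelow (Set.range v))
    (hy₀ : ∀ y, v y₀ + ‖x₀ - y₀‖ ^ 2 / (2 * r ^ 2) ≤ v y + ‖x₀ - y‖ ^ 2 / (2 * r ^ 2))
    (h : E N) :
    infConv v r (x₀ + h) - infConv v r x₀ ≤ v (y₀ + h) - v y₀ := by
  have hle := infConv_le (r := r) hv (x₀ + h) (y₀ + h)
  rw [show x₀ + h - (y₀ + h) = x₀ - y₀ by abel] at hle
  rw [infConv_eq_of_forall_le hy₀]
  linarith

end InfConv

section Subjet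

variable {N : ℕ} {w : E N → ℝ} {x p : E N} {Y : E N →ₗ[ℝ] E N}

theorem InSubjet.exists_isLittleO_norm (hw : InSubjet w x p Y) :
    ∃ g : E N → ℝ, g =o[𝓝 0] (fun h => ‖h‖) ∧ ∀ᶠ h in 𝓝 0, w x + ⟪p, h⟫ + g h ≤ w (x + h) := by
  obtain ⟨-, e, he, hev⟩ := hw
  refine ⟨fun h => 1 / 2 * ⟪Y h, h⟫ + e h, ?_, ?_⟩
  · exact ((Y.isBigO_inner_apply_self.const_mul_left _).add he.isBigO).trans_isLittleO
      (isLittleO_norm_right.mpr (isLittleO_norm_pow_id one_lt_two))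
  · filter_upwards [hev] with h hh
    linarith

theorem InSubjet.of_forall_sub_le {w' : E N → ℝ} {y : E N} (hw : InSubjet w x p Y)
    (hle : ∀ h, w (x + h) - w x ≤ w' (y + h) - w' y) : InSubjet w' y p Y := by
  obtain ⟨hY, e, he, hev⟩ := hw
  refine ⟨hY, e, he, ?_⟩
  filter_upwards [hev] with h hh
  linarith [hle h]

end Subjet

theorem sub_eq_sq_smul_of_inSubjet_infConv {N : ℕ} {v : E N → ℝ} {r : ℝ} {x₀ y₀ p : E N}
    {Y : E N →ₗ[ℝ] E N} (hv : BddBelow (Set.range v)) (hr : r ≠ 0)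
    (hy₀ : ∀ y, v y₀ + ‖x₀ - y₀‖ ^ 2 / (2 * r ^ 2) ≤ v y + ‖x₀ - y‖ ^ 2 / (2 * r ^ 2))
    (hpY : InSubjet (infConv v r) x₀ p Y) :
    x₀ - y₀ = r ^ 2 • p := by
  obtain ⟨g, hg, hsub⟩ := hpY.exists_isLittleO_norm
  have hpen : (fun h : E N => ‖h‖ ^ 2 / (2 * r ^ 2)) =o[𝓝 0] fun h => ‖h‖ := by
    simpa only [div_eq_inv_mul] using
      (isLittleO_norm_right.mpr (isLittleO_norm_pow_id one_lt_two)).const_mul_left (2 * r ^ 2)⁻¹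
  have hslope : p = (r ^ 2)⁻¹ • (x₀ - y₀) := by
    refine eq_of_eventually_inner_add_le_inner_add hg hpen ?_
    filter_upwards [hsub] with h hh
    linarith [infConv_add_le hv hy₀ h]
  rw [hslope, smul_inv_smul₀ (pow_ne_zero 2 hr)]

theorem infConv_subjet_general (N : ℕ) (v : E N → ℝ)
    (hb : ∃ M : ℝ, ∀ x, |v x| ≤ M) (hlsc : LowerSemicontinuous v)
    (r : ℝ) (hr : 0 < r) (x₀ p : E N) (Y : E N →ₗ[ℝ] E N)
    (hpY : InSubjet (infConv v r) x₀ p Y) :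
    infConv v r x₀ = v (x₀ - r ^ 2 • p) + (r ^ 2 / 2) * ‖p‖ ^ 2 ∧
    InSubjet v (x₀ - r ^ 2 • p) p Y := by
  obtain ⟨M, hM⟩ := hb
  have hv : BddBelow (Set.range v) := ⟨-M, by rintro _ ⟨x, rfl⟩; exact neg_le_of_abs_le (hM x)⟩
  obtain ⟨y₀, hy₀⟩ := hlsc.exists_forall_le_add_norm_sq_div hv (by positivity : 0 < 2 * r ^ 2) x₀
  have hy₀_eq : y₀ = x₀ - r ^ 2 • p := by
    rw [← sub_eq_sq_smul_of_inSubjet_infConv hv hr.ne' hy₀ hpY, sub_sub_cancel]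
  subst hy₀_eq
  refine ⟨?_, hpY.of_forall_sub_le (infConv_add_sub_le hv hy₀)⟩
  rw [infConv_eq_of_forall_le hy₀, sub_sub_cancel, norm_smul, mul_pow, Real.norm_eq_abs, sq_abs]
  field_simp

/-- Magic property of inf-convolutions: if `(p, Y) ∈ J^{2,-} v_r(x₀)` then, with
`y₀ = x₀ - r²p`, one has `v_r(x₀) = v(y₀) + (r²/2)|p|²` and `(p, Y) ∈ J^{2,-} v(y₀)`. -/
theorem infConv_subjet (N : ℕ) (hN : 1 ≤ N) (v : E N → ℝ)
    (hb : ∃ M : ℝ, ∀ x, |v x| ≤ M) (hlsc : LowerSemicontinuous v)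
    (r : ℝ) (hr : 0 < r) (x₀ p : E N) (Y : E N →ₗ[ℝ] E N)
    (hpY : InSubjet (infConv v r) x₀ p Y) :
    infConv v r x₀ = v (x₀ - r ^ 2 • p) + (r ^ 2 / 2) * ‖p‖ ^ 2 ∧
    InSubjet v (x₀ - r ^ 2 • p) p Y :=
  infConv_subjet_general N v hb hlsc r hr x₀ p Y hpY
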